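/- Let R be an integral domain, and let x ∈ R be a nonzero non-unit. Then there do not exist polynomials a, b ∈ R[s] with b·(x + s) = a·s and a·R[s] + b·R[s] = R[s]. -/

import Mathlib

open Polynomial

/-! Reducing `b * (x + s) = a * s` modulo `s` gives `b(0) = 0` and `a(0) ∈ x R`, so the image of
the unit ideal `(a, b)` under `s ↦ 0` lies in the proper ideal `x R`. -/

section MulCAddXEqMulX

variable {R : Type*} [CommSemiring R] {x : R} {a b : R[X]}

theorem coeff_zero_eq_of_mul_C_add_X_eq_mul_X (h : b * (C x + X) = a * X) :
    a.coeff 0 = x * b.coeff 1 + b.coeff 0 := by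
  have h1 := congrArg (coeff · 1) h
  simp only [mul_add, coeff_add, coeff_mul_C, coeff_mul_X] at h1
  rw [← h1, mul_comm]

theorem coeff_zero_eq_zero_of_mul_C_add_X_eq_mul_X [NoZeroDivisors R]
    (hx : x ≠ 0) (h : b * (C x + X) = a * X) : b.coeff 0 = 0 := by
  have h0 := congrArg (coeff · 0) h
  simp only [mul_add, coeff_add, coeff_mul_C, coeff_mul_X_zero, add_zero] at h0
  exact (mul_eq_zero.mp h0).resolve_right hx

theorem dvd_coeff_zero_of_mul_C_add_X_eq_mul_X [NoZeroDivisors R]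
    (hx : x ≠ 0) (h : b * (C x + X) = a * X) : x ∣ a.coeff 0 := by
  rw [coeff_zero_eq_of_mul_C_add_X_eq_mul_X h, coeff_zero_eq_zero_of_mul_C_add_X_eq_mul_X hx h,
    add_zero]
  exact dvd_mul_right x _

end MulCAddXEqMulX

/-- Let `R` be an integral domain and `x ∈ R` a nonzero non-unit. Then there are no
polynomials `a, b ∈ R[s]` with `b * (x + s) = a * s` and `(a, b) = R[s]`. -/
theorem stmt_3 (R : Type*) [CommRing R] [IsDomain R] (x : R) (hx : x ≠ 0)
    (hxu : ¬ IsUnit x) :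
    ¬ ∃ a b : R[X], b * (C x + X) = a * X ∧ Ideal.span {a, b} = (⊤ : Ideal R[X]) := by
  rintro ⟨a, b, h, hspan⟩
  have hab : IsCoprime a b := Ideal.mem_span_pair.mp (by simp [hspan])
  have hab₀ : IsCoprime (a.coeff 0) (b.coeff 0) := hab.map constantCoeff
  rw [coeff_zero_eq_zero_of_mul_C_add_X_eq_mul_X hx h, isCoprime_zero_right] at hab₀
  exact hxu (isUnit_of_dvd_unit (dvd_coeff_zero_of_mul_C_add_X_eq_mul_X hx h) hab₀)
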